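/- Let σ be a permutation of size n and k a positive integer. Then the number of internal insertion sequences of length k for σ satisfies |I(σ)|^k ≤ |𝒥(σ,k)| ≤ (|I(σ)| + 2nk + k²)^k. -/

import Mathlib

open Equiv

/-- Insertion of the point `(i, j)` into a permutation `σ` of size `n`:
the resulting permutation of size `n+1` sends `i ↦ j`, and points of `σ`
in columns `≥ i` are shifted right by one, points in rows `≥ j` up by one. -/
def insertPt {n : ℕ} (σ : Equiv.Perm (Fin n)) (i j : Fin (n + 1)) :
    Equiv.Perm (Fin (n + 1)) :=
  (finSuccEquiv' i).trans ((Equiv.optionCongr σ).trans (finSuccEquiv' j).symm)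

/-- Deletion of the point `(i, σ i)` from a permutation `σ` of size `m+1`:
the remaining points are shifted left/down to form a permutation of size `m`. -/
def deletePt {m : ℕ} (σ : Equiv.Perm (Fin (m + 1))) (i : Fin (m + 1)) :
    Equiv.Perm (Fin m) :=
  Equiv.removeNone ((finSuccEquiv' i).symm.trans (σ.trans (finSuccEquiv' (σ i))))

/-- The point `(a, τ a)` of `τ` is a record (external point): a left-to-right
minimum or maximum, or a right-to-left minimum or maximum. -/
def IsRecord {m : ℕ} (τ : Equiv.Perm (Fin m)) (a : Fin m) : Prop :=
  (∀ b, b < a → τ b < τ a) ∨ (∀ b, b < a → τ a < τ b) ∨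
  (∀ b, a < b → τ b < τ a) ∨ (∀ b, a < b → τ a < τ b)

open Classical in
/-- The set `I(σ)` of internal insertions for `σ`: pairs `(i,j)` such that the
inserted point is not a record of `insertPt σ i j`. -/
noncomputable def internalInsertions {n : ℕ} (σ : Equiv.Perm (Fin n)) :
    Finset (Fin (n + 1) × Fin (n + 1)) :=
  Finset.univ.filter fun p => ¬ IsRecord (insertPt σ p.1 p.2) p.1

open Classical in
/-- `Jcount k σ = |𝒥(σ,k)|`, the number of internal insertion sequences of
length `k` for `σ`. -/
noncomputable def Jcount : (k : ℕ) → {n : ℕ} → Equiv.Perm (Fin n) → ℕ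
  | 0, _, _ => 1
  | (k + 1), _, σ =>
      ∑ p : Fin (_ + 1) × Fin (_ + 1),
        if p ∈ internalInsertions σ then Jcount k (insertPt σ p.1 p.2) else 0

/-! An insertion position `(i, j)` is internal exactly when each of the four open quadrants around
it contains a point of `σ`. Inserting a point keeps every internal position internal (after shifting
it around the new point), so `|I|` never decreases along an insertion sequence: this gives the lower
bound. Conversely, after an internal insertion into a permutation of size `m`, every internal
position off the row and column of gaps just before the new point collapses, via `Fin.predAbove`,
injectively to an internal position of the old permutation. Hence `|I|` grows by at most
`2 (m + 2) - 1 = 2m + 3` per step, and before the `(t+1)`-st insertion of a sequence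
`|I| ≤ |I(σ)| + t (2n + t + 2)`; taking `t < k` gives the upper bound. -/

open Finset

namespace Fin

lemma val_succAbove {n : ℕ} (p : Fin (n + 1)) (a : Fin n) :
    (p.succAbove a : ℕ) = if (a : ℕ) < p then (a : ℕ) else a + 1 := by
  rcases lt_or_ge a.castSucc p with h | h
  · rw [succAbove_of_castSucc_lt _ _ h, val_castSucc, if_pos (show (a : ℕ) < p from h)]
  · rw [succAbove_of_le_castSucc _ _ h, val_succ, if_neg (not_lt.2 (show (p : ℕ) ≤ a from h))]

lemma val_predAbove {n : ℕ} (p : Fin n) (c : Fin (n + 1)) :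
    (p.predAbove c : ℕ) = if (c : ℕ) ≤ p then (c : ℕ) else c - 1 := by
  rcases lt_or_ge p.castSucc c with h | h
  · rw [predAbove_of_castSucc_lt _ _ h, val_pred, if_neg (not_le.2 (show (p : ℕ) < c from h))]
  · rw [predAbove_of_le_castSucc _ _ h, coe_castPred, if_pos (show (c : ℕ) ≤ p from h)]

lemma val_succAbove_lt_iff {n : ℕ} (p : Fin (n + 1)) (a : Fin n) :
    (p.succAbove a : ℕ) < p ↔ (a : ℕ) < p := by
  rw [val_succAbove]; split_ifs <;> omega

lemma val_succAbove_lt_val_castSucc_succAbove_iff {n : ℕ} (p : Fin (n + 1)) (a : Fin n)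
    (q : Fin (n + 1)) : (p.succAbove a : ℕ) < p.castSucc.succAbove q ↔ (a : ℕ) < q := by
  rw [val_succAbove, val_succAbove, val_castSucc]; split_ifs <;> omega

lemma val_succAbove_lt_iff_lt_val_predAbove {n : ℕ} (p : Fin (n + 1)) (a : Fin n)
    (c : Fin (n + 2)) : (p.succAbove a : ℕ) < c ↔ (a : ℕ) < p.predAbove c := by
  rw [val_succAbove, val_predAbove]; split_ifs <;> omega

lemma lt_val_predAbove_iff_of_iff {n : ℕ} {a : ℕ} {p : Fin (n + 1)} {c : Fin (n + 2)}
    (h : a < p ↔ (p : ℕ) < c) : a < p.predAbove c ↔ (p : ℕ) < c := by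
  rw [val_predAbove]; split_ifs <;> omega

lemma predAbove_injOn {n : ℕ} (p : Fin n) : Set.InjOn p.predAbove {p.castSucc}ᶜ :=
  fun c hc c' hc' h => by rw [← succAbove_predAbove hc, h, succAbove_predAbove hc']

end Fin

lemma card_cross_add_one {α β : Type*} [Fintype α] [Fintype β] [DecidableEq α] [DecidableEq β]
    (x : α) (y : β) :
    #(({x} ×ˢ univ ∪ univ ×ˢ {y} : Finset (α × β))) + 1 = Fintype.card α + Fintype.card β := by
  have h := card_union_add_card_inter ({x} ×ˢ univ : Finset (α × β)) (univ ×ˢ {y})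
  simp only [product_inter_product, inter_univ, univ_inter, card_product, card_singleton,
    card_univ, one_mul, mul_one] at h
  omega

lemma not_isRecord_iff {m : ℕ} (τ : Perm (Fin m)) (a : Fin m) :
    ¬ IsRecord τ a ↔ ∀ left below : Bool, ∃ b ≠ a, (b < a ↔ left) ∧ (τ b < τ a ↔ below) := by
  simp only [IsRecord, not_or, not_forall, not_lt, exists_prop, Bool.forall_bool,
    Bool.false_eq_true, iff_false, iff_true]
  constructor
  · rintro ⟨⟨b₁, hb₁, h₁⟩, ⟨b₂, hb₂, h₂⟩, ⟨b₃, hb₃, h₃⟩, ⟨b₄, hb₄, h₄⟩⟩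
    refine ⟨⟨⟨b₃, ?_⟩, ⟨b₄, ?_⟩⟩, ⟨b₁, ?_⟩, ⟨b₂, ?_⟩⟩
    all_goals grind [τ.injective.eq_iff]
  · rintro ⟨⟨⟨b₃, hb₃⟩, ⟨b₄, hb₄⟩⟩, ⟨b₁, hb₁⟩, ⟨b₂, hb₂⟩⟩
    refine ⟨⟨b₁, ?_⟩, ⟨b₂, ?_⟩, ⟨b₃, ?_⟩, ⟨b₄, ?_⟩⟩
    all_goals grind

section Insertion

variable {n : ℕ} (σ : Perm (Fin n))

@[simp]
lemma insertPt_apply_self (i j : Fin (n + 1)) : insertPt σ i j i = j := by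
  simp [insertPt]

@[simp]
lemma insertPt_apply_succAbove (i j : Fin (n + 1)) (a : Fin n) :
    insertPt σ i j (i.succAbove a) = j.succAbove (σ a) := by
  simp [insertPt]

/-- Each of the four open quadrants around the gap position `(i, j)` contains a point `(a, σ a)`
of `σ`; `left` and `below` select the quadrant. -/
def QuadrantsNonempty (i j : Fin (n + 1)) : Prop :=
  ∀ left below : Bool, ∃ a : Fin n, ((a : ℕ) < i ↔ left) ∧ ((σ a : ℕ) < j ↔ below)

lemma mem_internalInsertions_iff (i j : Fin (n + 1)) :
    (i, j) ∈ internalInsertions σ ↔ QuadrantsNonempty σ i j := by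
  simp only [internalInsertions, mem_filter, mem_univ, true_and, not_isRecord_iff,
    QuadrantsNonempty, Fin.exists_iff_succAbove i, ne_eq, not_true_eq_false, false_and, false_or,
    Fin.succAbove_ne, not_false_eq_true, true_and, insertPt_apply_self, insertPt_apply_succAbove,
    Fin.lt_def, Fin.val_succAbove_lt_iff]

variable {σ}

lemma QuadrantsNonempty.succAbove_insertPt {i' j' : Fin (n + 1)} (h : QuadrantsNonempty σ i' j')
    (i j : Fin (n + 1)) :
    QuadrantsNonempty (insertPt σ i j) (i.castSucc.succAbove i') (j.castSucc.succAbove j') := by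
  intro left below
  obtain ⟨a, ha⟩ := h left below
  refine ⟨i.succAbove a, ?_⟩
  rwa [insertPt_apply_succAbove, Fin.val_succAbove_lt_val_castSucc_succAbove_iff,
    Fin.val_succAbove_lt_val_castSucc_succAbove_iff]

lemma QuadrantsNonempty.predAbove_of_insertPt {i j : Fin (n + 1)} (hij : QuadrantsNonempty σ i j)
    {c d : Fin (n + 2)} (h : QuadrantsNonempty (insertPt σ i j) c d) :
    QuadrantsNonempty σ (i.predAbove c) (j.predAbove d) := by
  intro left below
  obtain ⟨b, hb⟩ := h left below
  rcases eq_or_ne b i with rfl | hbi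
  · -- the witness is the new point: take instead the point of `σ` in that quadrant around `(i, j)`
    obtain ⟨a, ha⟩ := hij left below
    rw [insertPt_apply_self] at hb
    exact ⟨a, (Fin.lt_val_predAbove_iff_of_iff (ha.1.trans hb.1.symm)).trans hb.1,
      (Fin.lt_val_predAbove_iff_of_iff (ha.2.trans hb.2.symm)).trans hb.2⟩
  · obtain ⟨a, rfl⟩ := Fin.exists_succAbove_eq hbi
    refine ⟨a, ?_⟩
    rwa [insertPt_apply_succAbove, Fin.val_succAbove_lt_iff_lt_val_predAbove,
      Fin.val_succAbove_lt_iff_lt_val_predAbove] at hb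

variable (σ) in
lemma card_internalInsertions_le_insertPt (i j : Fin (n + 1)) :
    #(internalInsertions σ) ≤ #(internalInsertions (insertPt σ i j)) := by
  refine card_le_card_of_injOn (Prod.map i.castSucc.succAbove j.castSucc.succAbove) ?_
    (Fin.succAbove_right_injective.prodMap Fin.succAbove_right_injective).injOn
  rintro ⟨i', j'⟩ h
  simp only [mem_coe, mem_internalInsertions_iff, Prod.map] at h ⊢
  exact h.succAbove_insertPt i j

lemma card_internalInsertions_insertPt_le {i j : Fin (n + 1)}
    (hij : (i, j) ∈ internalInsertions σ) :
    #(internalInsertions (insertPt σ i j)) ≤ #(internalInsertions σ) + (2 * n + 3) := by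
  set cross : Finset (Fin (n + 2) × Fin (n + 2)) := {i.castSucc} ×ˢ univ ∪ univ ×ˢ {j.castSucc}
  have h_cross : #cross + 1 = (n + 2) + (n + 2) := by
    simpa only [Fintype.card_fin] using card_cross_add_one i.castSucc j.castSucc
  have h_rest : #(internalInsertions (insertPt σ i j) \ cross) ≤ #(internalInsertions σ) := by
    refine card_le_card_of_injOn (Prod.map i.predAbove j.predAbove) ?_
      (((Fin.predAbove_injOn i).prodMap (Fin.predAbove_injOn j)).mono ?_)
    · rintro ⟨c, d⟩ h
      simp only [coe_sdiff, Set.mem_sdiff, mem_coe, mem_internalInsertions_iff, Prod.map] at h ⊢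
      exact ((mem_internalInsertions_iff σ i j).1 hij).predAbove_of_insertPt h.1
    · rintro ⟨c, d⟩ h
      simp only [coe_sdiff, Set.mem_sdiff, mem_coe, cross, mem_union, mem_product, mem_singleton,
        mem_univ, and_true, true_and, not_or] at h
      exact h.2
  have := card_le_card_sdiff_add_card (s := internalInsertions (insertPt σ i j)) (t := cross)
  omega

end Insertion

lemma Jcount_succ {n : ℕ} (σ : Perm (Fin n)) (k : ℕ) :
    Jcount (k + 1) σ = ∑ p ∈ internalInsertions σ, Jcount k (insertPt σ p.1 p.2) := by
  classical
  rw [Jcount, Fintype.sum_ite_mem]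

lemma pow_card_internalInsertions_le_Jcount (k : ℕ) {n : ℕ} (σ : Perm (Fin n)) :
    #(internalInsertions σ) ^ k ≤ Jcount k σ := by
  induction k generalizing n with
  | zero => rfl
  | succ k ih =>
    rw [Jcount_succ, pow_succ', ← smul_eq_mul]
    refine card_nsmul_le_sum _ _ _ fun p _ => ?_
    exact (Nat.pow_le_pow_left (card_internalInsertions_le_insertPt σ p.1 p.2) k).trans (ih _)

/-- Stated for length `k + 1` because the growth bound `card_internalInsertions_insertPt_le` is
needed only between consecutive insertions, i.e. `k` times. -/
lemma Jcount_succ_le (k : ℕ) {n : ℕ} (σ : Perm (Fin n)) :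
    Jcount (k + 1) σ ≤ (#(internalInsertions σ) + k * (2 * n + k + 2)) ^ (k + 1) := by
  induction k generalizing n with
  | zero => simp [Jcount]
  | succ k ih =>
    set B := #(internalInsertions σ) + (k + 1) * (2 * n + (k + 1) + 2) with hB
    have h_step :
        ∀ p ∈ internalInsertions σ, Jcount (k + 1) (insertPt σ p.1 p.2) ≤ B ^ (k + 1) := by
      intro p hp
      have h_grow := card_internalInsertions_insertPt_le hp
      exact (ih _).trans (Nat.pow_le_pow_left (by linarith) _)
    calc Jcount (k + 2) σ ≤ #(internalInsertions σ) • B ^ (k + 1) := by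
          rw [Jcount_succ]; exact sum_le_card_nsmul _ _ _ h_step
      _ ≤ B ^ (k + 2) := by
          rw [smul_eq_mul, pow_succ' B (k + 1)]
          exact Nat.mul_le_mul_right _ (Nat.le_add_right _ _)

theorem insertion_sequences_bounds_general {n : ℕ} (σ : Equiv.Perm (Fin n)) (k : ℕ) :
    (internalInsertions σ).card ^ k ≤ Jcount k σ ∧
    Jcount k σ ≤ ((internalInsertions σ).card + 2 * n * k + k ^ 2) ^ k := by
  refine ⟨pow_card_internalInsertions_le_Jcount k σ, ?_⟩
  cases k with
  | zero => rfl
  | succ k => exact (Jcount_succ_le k σ).trans (Nat.pow_le_pow_left (by linarith) _)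

/-- for a permutation `σ` of size `n` and `k > 0`,
`|I(σ)|^k ≤ |𝒥(σ,k)| ≤ (|I(σ)| + 2nk + k²)^k`. -/
theorem insertion_sequences_bounds {n : ℕ} (σ : Equiv.Perm (Fin n)) (k : ℕ)
    (hk : 0 < k) :
    (internalInsertions σ).card ^ k ≤ Jcount k σ ∧
    Jcount k σ ≤ ((internalInsertions σ).card + 2 * n * k + k ^ 2) ^ k :=
  insertion_sequences_bounds_general σ k
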